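/- Let f : [0,1] → ℝ be 1-Lipschitz. For integers k ≥ 0 and 0 ≤ i < 2^k set c_{i,k} = 2^k (f((i+1)/2^k) - f(i/2^k)) and d_{i,k} = 2^k (f(i/2^k) - 2 f((2i+1)/2^{k+1}) + f((i+1)/2^k)). Then for every n ≥ 1, the weighted sum ∑_{k=0}^{n-1} 2^{-k} ∑_{i=0}^{2^k - 1} d_{i,k}^2 ≤ 1. -/
import Mathlib


/-- The normalized second difference `d_{i,k}` of `f` over the dyadic interval
`[i/2^k, (i+1)/2^k]`. -/
noncomputable def dCoef (f : ℝ → ℝ) (i k : ℕ) : ℝ :=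
  2 ^ k * (f ((i : ℝ) / 2 ^ k) - 2 * f ((2 * (i : ℝ) + 1) / 2 ^ (k + 1)) + f (((i : ℝ) + 1) / 2 ^ k))

noncomputable def cCoef (f : ℝ → ℝ) (i k : ℕ) : ℝ :=
  2 ^ k * (f (((i : ℝ) + 1) / 2 ^ k) - f ((i : ℝ) / 2 ^ k))

lemma key (f : ℝ → ℝ) (i k : ℕ) :
    2 * (cCoef f i k) ^ 2 + 2 * (dCoef f i k) ^ 2
      = (cCoef f (2 * i) (k + 1)) ^ 2 + (cCoef f (2 * i + 1) (k + 1)) ^ 2 := by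
  unfold cCoef dCoef
  have h2 : (2 : ℝ) ^ (k + 1) ≠ 0 := by positivity
  have h2' : (2 : ℝ) ^ k ≠ 0 := by positivity
  push_cast
  have e1 : (2 * (i : ℝ)) / 2 ^ (k + 1) = (i : ℝ) / 2 ^ k := by
    field_simp
    ring
  have e2 : (2 * (i : ℝ) + 1 + 1) / 2 ^ (k + 1) = ((i : ℝ) + 1) / 2 ^ k := by
    field_simp
    ring
  rw [e1, e2]
  ring

lemma double_sum (g : ℕ → ℝ) (m : ℕ) :
    ∑ j ∈ Finset.range (2 * m), g j = ∑ i ∈ Finset.range m, (g (2 * i) + g (2 * i + 1)) := by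
  induction m with
  | zero => simp
  | succ m ih =>
      have : 2 * (m + 1) = (2 * m + 1) + 1 := by ring
      rw [this, Finset.sum_range_succ, Finset.sum_range_succ, ih, Finset.sum_range_succ]
      ring

noncomputable def A (f : ℝ → ℝ) (k : ℕ) : ℝ :=
  ((2 : ℝ) ^ k)⁻¹ * ∑ i ∈ Finset.range (2 ^ k), (cCoef f i k) ^ 2

lemma step (f : ℝ → ℝ) (k : ℕ) :
    ((2 : ℝ) ^ k)⁻¹ * ∑ i ∈ Finset.range (2 ^ k), (dCoef f i k) ^ 2 = A f (k + 1) - A f k := by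
  unfold A
  have h : (2 : ℕ) ^ (k + 1) = 2 * 2 ^ k := by ring
  rw [h, double_sum (fun j => (cCoef f j (k + 1)) ^ 2)]
  have : ∑ i ∈ Finset.range (2 ^ k),
      ((cCoef f (2 * i) (k + 1)) ^ 2 + (cCoef f (2 * i + 1) (k + 1)) ^ 2)
      = ∑ i ∈ Finset.range (2 ^ k), (2 * (cCoef f i k) ^ 2 + 2 * (dCoef f i k) ^ 2) := by
    exact Finset.sum_congr rfl fun i _ => (key f i k).symm
  rw [this, Finset.sum_add_distrib, ← Finset.mul_sum, ← Finset.mul_sum]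
  have h2 : (2 : ℝ) ^ k ≠ 0 := by positivity
  field_simp
  ring

lemma cBound (f : ℝ → ℝ) (hf : LipschitzOnWith 1 f (Set.Icc 0 1)) {i k : ℕ}
    (hi : i < 2 ^ k) : (cCoef f i k) ^ 2 ≤ 1 := by
  have h2 : (0 : ℝ) < 2 ^ k := by positivity
  have hi' : ((i : ℝ) + 1) ≤ 2 ^ k := by
    have : (i : ℝ) + 1 ≤ (2 : ℝ) ^ k := by exact_mod_cast Nat.succ_le_of_lt hi
    exact this
  have hx : ((i : ℝ) + 1) / 2 ^ k ∈ Set.Icc (0 : ℝ) 1 := by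
    constructor
    · positivity
    · rw [div_le_one h2]; exact hi'
  have hy : (i : ℝ) / 2 ^ k ∈ Set.Icc (0 : ℝ) 1 := by
    constructor
    · positivity
    · rw [div_le_one h2]; linarith
  have := hf.dist_le_mul _ hx _ hy
  rw [Real.dist_eq, Real.dist_eq] at this
  have habs : |f (((i : ℝ) + 1) / 2 ^ k) - f ((i : ℝ) / 2 ^ k)| ≤ ((2 : ℝ) ^ k)⁻¹ := by
    have harg : |((i : ℝ) + 1) / 2 ^ k - (i : ℝ) / 2 ^ k| = ((2 : ℝ) ^ k)⁻¹ := by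
      rw [div_sub_div_same]
      have : ((i : ℝ) + 1 - i) = 1 := by ring
      rw [this, abs_of_pos (by positivity)]
      exact one_div _
    calc |f (((i : ℝ) + 1) / 2 ^ k) - f ((i : ℝ) / 2 ^ k)|
        ≤ 1 * |((i : ℝ) + 1) / 2 ^ k - (i : ℝ) / 2 ^ k| := by simpa using this
      _ = ((2 : ℝ) ^ k)⁻¹ := by rw [one_mul, harg]
  have hc : |cCoef f i k| ≤ 1 := by
    unfold cCoef
    rw [abs_mul, abs_of_pos h2]
    calc (2 : ℝ) ^ k * |f (((i : ℝ) + 1) / 2 ^ k) - f ((i : ℝ) / 2 ^ k)|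
        ≤ 2 ^ k * ((2 : ℝ) ^ k)⁻¹ := by
          exact mul_le_mul_of_nonneg_left habs (le_of_lt h2)
      _ = 1 := mul_inv_cancel₀ (ne_of_gt h2)
  calc (cCoef f i k) ^ 2 = |cCoef f i k| ^ 2 := (sq_abs _).symm
    _ ≤ 1 ^ 2 := by exact pow_le_pow_left₀ (abs_nonneg _) hc 2
    _ = 1 := one_pow 2

/-- For a 1-Lipschitz function `f` on `[0,1]`, the weighted sum of squared normalized
second differences over dyadic intervals is at most `1`. -/
theorem stmt1 (f : ℝ → ℝ) (hf : LipschitzOnWith 1 f (Set.Icc 0 1)) :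
    ∀ n : ℕ, 1 ≤ n →
      ∑ k ∈ Finset.range n, ((2 : ℝ) ^ k)⁻¹ * ∑ i ∈ Finset.range (2 ^ k), (dCoef f i k) ^ 2 ≤ 1 := by
  intro n _
  have htel : ∑ k ∈ Finset.range n,
      ((2 : ℝ) ^ k)⁻¹ * ∑ i ∈ Finset.range (2 ^ k), (dCoef f i k) ^ 2 = A f n - A f 0 := by
    rw [← Finset.sum_range_sub (A f)]
    exact Finset.sum_congr rfl fun k _ => step f k
  rw [htel]
  have hA0 : 0 ≤ A f 0 := by
    unfold A
    apply mul_nonneg (by positivity)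
    exact Finset.sum_nonneg fun i _ => sq_nonneg _
  have hAn : A f n ≤ 1 := by
    unfold A
    have hsum : ∑ i ∈ Finset.range (2 ^ n), (cCoef f i n) ^ 2 ≤ (2 ^ n : ℝ) := by
      calc ∑ i ∈ Finset.range (2 ^ n), (cCoef f i n) ^ 2
          ≤ ∑ i ∈ Finset.range (2 ^ n), (1 : ℝ) :=
            Finset.sum_le_sum fun i hi => cBound f hf (Finset.mem_range.mp hi)
        _ = (2 ^ n : ℝ) := by simp
    have h2 : (0 : ℝ) < 2 ^ n := by positivity
    calc ((2 : ℝ) ^ n)⁻¹ * ∑ i ∈ Finset.range (2 ^ n), (cCoef f i n) ^ 2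
        ≤ ((2 : ℝ) ^ n)⁻¹ * (2 ^ n : ℝ) :=
          mul_le_mul_of_nonneg_left hsum (by positivity)
      _ = 1 := inv_mul_cancel₀ (ne_of_gt h2)
  linarith
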